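/- Let n ≥ 1, let A ∈ M_n(ℂ) and let b, c, d ∈ ℂ. Then ‖[[Aᵗ, b·I_n],[c·I_n, d·I_n]]‖ = ‖[[A, b·I_n],[c·I_n, d·I_n]]‖, where ‖·‖ is the ℓ²→ℓ² operator norm on M_{2n}(ℂ). (That is, the map Γ_n is an isometry.) -/

import Mathlib

open Matrix
open scoped Matrix.Norms.L2Operator

/-!
The operator norm of `X` is the square root of the largest root of the characteristic polynomial
of `Xᴴ * X`, so it suffices to see that `Γ_n` preserves that polynomial. The lower right block of
`λ - Xᴴ * X` is scalar, so a Schur complement turns `det (λ - Xᴴ * X)` into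
`det (α AᴴA + β Aᴴ + β' A + γ)`, with coefficients depending only on `b, c, d, λ`. Completing the
square writes this as `det (α (Aᴴ + p)(A + q) + μ)`, which by Sylvester's identity does not change
when the two factors are swapped; swapping them and transposing amounts to replacing `A` by `Aᵀ`.
-/

namespace Matrix

variable {k : Type*} [Fintype k] [DecidableEq k]

theorem det_mul_add_smul_one_comm {R : Type*} [CommRing R] (X Y : Matrix k k R) (μ : R) :
    det (X * Y + μ • 1) = det (Y * X + μ • 1) := by
  have h := congrArg (Polynomial.eval μ) (charpoly_mul_comm (-X) Y)
  simpa only [eval_charpoly, scalar_apply, ← smul_one_eq_diagonal, Matrix.neg_mul,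
    Matrix.mul_neg, sub_neg_eq_add, add_comm] using h

section Field

variable {K : Type*} [Field K]

theorem det_smul_mul_add_comm (X Y : Matrix k k K) (α β β' γ : K) :
    det (α • (X * Y) + β • X + β' • Y + γ • 1) =
      det (α • (Y * X) + β • X + β' • Y + γ • 1) := by
  rcases eq_or_ne α 0 with rfl | hα
  · simp only [zero_smul, zero_add]
  obtain ⟨p, rfl⟩ : ∃ p, β' = α * p := ⟨β' / α, by field_simp⟩
  obtain ⟨q, rfl⟩ : ∃ q, β = α * q := ⟨β / α, by field_simp⟩
  have complete_square : ∀ (U V : Matrix k k K) (u v : K),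
      α • (U * V) + (α * v) • U + (α * u) • V + γ • 1 =
        (α • (U + u • 1)) * (V + v • 1) + (γ - α * u * v) • 1 := by
    intro U V u v
    simp only [Matrix.smul_mul, Matrix.mul_smul, Matrix.add_mul, Matrix.mul_add, smul_add,
      smul_smul, Matrix.mul_one, Matrix.one_mul]
    module
  rw [complete_square, add_right_comm _ (_ • X), complete_square, det_mul_add_smul_one_comm,
    Matrix.mul_smul, ← Matrix.smul_mul, mul_right_comm]

theorem det_fromBlocks_smul_one (P Q R : Matrix k k K) {σ : K} (hσ : σ ≠ 0) :
    det (fromBlocks P Q R (σ • 1)) = det (σ • P - Q * R) := by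
  have hinv : σ⁻¹ • 1 * σ • (1 : Matrix k k K) = 1 := by
    rw [smul_mul_smul, inv_mul_cancel₀ hσ, one_smul, Matrix.one_mul]
  let := invertibleOfLeftInverse _ _ hinv
  rw [det_fromBlocks₂₂, invOf_eq_left_inv hinv, ← det_mul]
  congr 1
  simp only [Matrix.mul_sub, Matrix.smul_mul, Matrix.mul_smul, Matrix.one_mul, Matrix.mul_one,
    smul_smul, inv_mul_cancel₀ hσ, one_smul]

variable [StarRing K]

def starQuadratic (α β β' γ : K) (B : Matrix k k K) : Matrix k k K :=
  α • (Bᴴ * B) + β • Bᴴ + β' • B + γ • 1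

theorem det_starQuadratic_transpose (α β β' γ : K) (B : Matrix k k K) :
    det (starQuadratic α β β' γ Bᵀ) = det (starQuadratic α β β' γ B) := by
  rw [starQuadratic, starQuadratic, det_smul_mul_add_comm Bᴴ,
    ← det_transpose (α • (B * Bᴴ) + β • Bᴴ + β' • B + γ • 1)]
  simp only [transpose_add, transpose_smul, transpose_mul, transpose_one,
    conjTranspose_transpose_eq_transpose_conjTranspose]

theorem exists_det_scalar_sub_conjTranspose_mul_self_fromBlocks (b c d t : K)
    (ht : t ≠ star b * b + star d * d) :
    ∃ α β β' γ : K, ∀ B : Matrix k k K,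
      det (scalar (k ⊕ k) t - (fromBlocks B (b • 1) (c • 1) (d • 1))ᴴ *
        fromBlocks B (b • 1) (c • 1) (d • 1)) = det (starQuadratic α β β' γ B) := by
  set σ := t - (star b * b + star d * d)
  refine ⟨-(σ + b * star b), -(b * star d * c), -(star c * d * star b),
    σ * (t - star c * c) - star c * d * star d * c, fun B => ?_⟩
  have hblocks : scalar (k ⊕ k) t - (fromBlocks B (b • 1) (c • 1) (d • 1))ᴴ *
      fromBlocks B (b • 1) (c • 1) (d • 1) = fromBlocks (t • 1 - Bᴴ * B - (star c * c) • 1)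
        (-(b • Bᴴ + (star c * d) • 1)) (-(star b • B + (star d * c) • 1)) (σ • 1) := by
    rw [scalar_apply, ← smul_one_eq_diagonal, ← fromBlocks_one, fromBlocks_smul,
      fromBlocks_conjTranspose, fromBlocks_multiply, sub_eq_add_neg, fromBlocks_neg,
      fromBlocks_add]
    congr 1 <;>
    · simp only [conjTranspose_smul, conjTranspose_one, Matrix.smul_mul, Matrix.mul_smul,
        smul_smul, Matrix.mul_one, Matrix.one_mul, smul_zero]
      module
  rw [hblocks, det_fromBlocks_smul_one _ _ _ (sub_ne_zero.mpr ht), starQuadratic]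
  congr 1
  simp only [Matrix.add_mul, Matrix.mul_add, Matrix.smul_mul, Matrix.mul_smul, smul_smul,
    Matrix.mul_one, Matrix.one_mul, Matrix.neg_mul, Matrix.mul_neg, smul_sub]
  module

theorem charpoly_conjTranspose_mul_self_fromBlocks_transpose [Infinite K] (A : Matrix k k K)
    (b c d : K) :
    ((fromBlocks Aᵀ (b • 1) (c • 1) (d • 1))ᴴ * fromBlocks Aᵀ (b • 1) (c • 1) (d • 1) :
        Matrix (k ⊕ k) (k ⊕ k) K).charpoly =
      ((fromBlocks A (b • 1) (c • 1) (d • 1))ᴴ * fromBlocks A (b • 1) (c • 1) (d • 1) :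
        Matrix (k ⊕ k) (k ⊕ k) K).charpoly := by
  refine Polynomial.eq_of_infinite_eval_eq _ _
    ((Set.finite_singleton (star b * b + star d * d)).infinite_compl.mono fun t ht => ?_)
  obtain ⟨α, β, β', γ, hdet⟩ :=
    exists_det_scalar_sub_conjTranspose_mul_self_fromBlocks (k := k) b c d t ht
  simp only [Set.mem_ofPred_eq, eval_charpoly, hdet, det_starQuadratic_transpose]

end Field

theorem l2_opNorm_eq_of_charpoly_conjTranspose_mul_self_eq {m m' n : Type*} [Fintype m]
    [Fintype m'] [Fintype n] [DecidableEq n] {X : Matrix m n ℂ} {Y : Matrix m' n ℂ}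
    (h : (Xᴴ * X).charpoly = (Yᴴ * Y).charpoly) : ‖X‖ = ‖Y‖ := by
  have hspectrum : spectrum ℂ (Xᴴ * X) = spectrum ℂ (Yᴴ * Y) := by
    ext
    simp only [mem_spectrum_iff_isRoot_charpoly, h]
  have hX : IsSelfAdjoint (Xᴴ * X) := isHermitian_conjTranspose_mul_self X
  have hY : IsSelfAdjoint (Yᴴ * Y) := isHermitian_conjTranspose_mul_self Y
  have hgram : ‖Xᴴ * X‖₊ = ‖Yᴴ * Y‖₊ := by
    rw [← ENNReal.coe_inj, ← hX.spectralRadius_eq_nnnorm, ← hY.spectralRadius_eq_nnnorm,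
      spectralRadius, hspectrum, spectralRadius]
  rw [l2_opNNNorm_conjTranspose_mul_self, l2_opNNNorm_conjTranspose_mul_self,
    mul_self_inj zero_le zero_le] at hgram
  exact congrArg NNReal.toReal hgram

end Matrix

theorem stmt13_general (n : ℕ) (A : Matrix (Fin n) (Fin n) ℂ) (b c d : ℂ) :
    ‖Matrix.fromBlocks Aᵀ (b • (1 : Matrix (Fin n) (Fin n) ℂ))
        (c • (1 : Matrix (Fin n) (Fin n) ℂ)) (d • (1 : Matrix (Fin n) (Fin n) ℂ))‖ =
      ‖Matrix.fromBlocks A (b • (1 : Matrix (Fin n) (Fin n) ℂ))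
        (c • (1 : Matrix (Fin n) (Fin n) ℂ)) (d • (1 : Matrix (Fin n) (Fin n) ℂ))‖ :=
  l2_opNorm_eq_of_charpoly_conjTranspose_mul_self_eq
    (charpoly_conjTranspose_mul_self_fromBlocks_transpose A b c d)

/-- The map `Γ_n` is an isometry for the ℓ²→ℓ² operator norm:
`‖[[Aᵗ, b•I], [c•I, d•I]]‖ = ‖[[A, b•I], [c•I, d•I]]‖`. -/
theorem stmt13 (n : ℕ) (hn : 1 ≤ n) (A : Matrix (Fin n) (Fin n) ℂ) (b c d : ℂ) :
    ‖Matrix.fromBlocks Aᵀ (b • (1 : Matrix (Fin n) (Fin n) ℂ))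
        (c • (1 : Matrix (Fin n) (Fin n) ℂ)) (d • (1 : Matrix (Fin n) (Fin n) ℂ))‖ =
      ‖Matrix.fromBlocks A (b • (1 : Matrix (Fin n) (Fin n) ℂ))
        (c • (1 : Matrix (Fin n) (Fin n) ℂ)) (d • (1 : Matrix (Fin n) (Fin n) ℂ))‖ :=
  stmt13_general n A b c d
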